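/- Let T = {x, y} be a two-element terminal set. A family F of subsets of T is the matching pattern on T of some finite simple graph containing x and y if and only if F is one of the seven families ∅, {∅}, {{x}}, {{y}}, {{x,y}}, {{x},{y}}, {∅,{x,y}}. -/

import Mathlib

/-- A finite simple graph: a finite vertex set together with a symmetric,
irreflexive adjacency relation whose endpoints lie in the vertex set. -/
structure FinGraph (V : Type) where
  verts : Set V
  finite : verts.Finite
  Adj : V → V → Prop
  symm : ∀ u v, Adj u v → Adj v u
  irrefl : ∀ v, ¬ Adj v v
  mem_of_adj : ∀ u v, Adj u v → u ∈ verts ∧ v ∈ verts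

/-- The set of vertices covered by a set of (unordered) edges. -/
def coversVerts {V : Type} (M : Set (Sym2 V)) : Set V := {v | ∃ e ∈ M, v ∈ e}

/-- `M` is a matching of `G`: a set of edges of `G`, no two of which share an endpoint. -/
def FinGraph.IsMatching {V : Type} (G : FinGraph V) (M : Set (Sym2 V)) : Prop :=
  (∀ e ∈ M, ∃ u v, G.Adj u v ∧ e = s(u, v)) ∧
  ∀ e ∈ M, ∀ f ∈ M, e ≠ f → ∀ v, v ∈ e → v ∉ f

/-- The matching pattern of `G` on a terminal set `T`: the family of subsets `X ⊆ T`
such that some matching of `G` covers exactly `(V(G) \ T) ∪ X`. -/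
def FinGraph.matchingPattern {V : Type} (G : FinGraph V) (T : Set V) : Set (Set V) :=
  {X | X ⊆ T ∧ ∃ M, G.IsMatching M ∧ coversVerts M = (G.verts \ T) ∪ X}

/-! Every matching covers an even number of vertices, and a matching witnessing `X` in the
pattern on `T` covers the disjoint union `(V(G) \ T) ∪ X`. Hence all members of a matching
pattern on `{x, y}` have the parity of `|V(G) \ T|`: the pattern lies inside `{∅, {x, y}}` or
inside `{{x}, {y}}`, and the subfamilies of these two families are exactly the seven listed ones.
Conversely, each of the seven is realised on `x`, `y` and at most two fresh vertices `z`, `w`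
(available since `V` is infinite) by no edges, the edge `xz`, the edges `xz, yw`, the path
`x z y`, or the edge `xy`. -/

open Set

section coversVerts

variable {V : Type} {M : Set (Sym2 V)} {u v : V}

@[simp]
theorem mem_coversVerts : v ∈ coversVerts M ↔ ∃ e ∈ M, v ∈ e := Iff.rfl

@[simp]
theorem coversVerts_empty : coversVerts (∅ : Set (Sym2 V)) = ∅ := by
  ext; simp

@[simp]
theorem coversVerts_singleton : coversVerts {s(u, v)} = {u, v} := by
  ext; simp

theorem Set.Finite.of_coversVerts (h : (coversVerts M).Finite) : M.Finite := by
  refine ((h.prod h).image fun p => s(p.1, p.2)).subset fun e he => ?_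
  induction e using Sym2.ind with
  | h a b =>
    exact ⟨(a, b), ⟨⟨_, he, Sym2.mem_mk_left a b⟩, ⟨_, he, Sym2.mem_mk_right a b⟩⟩,
      rfl⟩

end coversVerts

namespace FinGraph

variable {V : Type} {G : FinGraph V} {M : Set (Sym2 V)} {T X Y : Set V} {u v : V}

theorem isMatching_empty (G : FinGraph V) : G.IsMatching ∅ := ⟨by simp, by simp⟩

theorem IsMatching.insert (hM : G.IsMatching M) (huv : G.Adj u v)
    (hu : u ∉ coversVerts M) (hv : v ∉ coversVerts M) : G.IsMatching (insert s(u, v) M) := by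
  have hfresh : ∀ f ∈ M, ∀ w ∈ s(u, v), w ∉ f := by
    rintro f hf w hw hwf
    rcases Sym2.mem_iff.1 hw with rfl | rfl
    exacts [hu ⟨f, hf, hwf⟩, hv ⟨f, hf, hwf⟩]
  refine ⟨?_, ?_⟩
  · rintro e (rfl | he)
    exacts [⟨u, v, huv, rfl⟩, hM.1 e he]
  · rintro e (rfl | he) f (rfl | hf) hef w hwe hwf
    exacts [hef rfl, hfresh f hf w hwe hwf, hfresh e he w hwf hwe, hM.2 e he f hf hef w hwe hwf]

theorem isMatching_singleton (h : G.Adj u v) : G.IsMatching {s(u, v)} := by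
  simpa using G.isMatching_empty.insert h (by simp) (by simp)

theorem IsMatching.coversVerts_subset (hM : G.IsMatching M) : coversVerts M ⊆ G.verts := by
  rintro w ⟨e, he, hwe⟩
  obtain ⟨a, b, hab, rfl⟩ := hM.1 e he
  rcases Sym2.mem_iff.1 hwe with rfl | rfl
  exacts [(G.mem_of_adj _ _ hab).1, (G.mem_of_adj _ _ hab).2]

theorem IsMatching.exists_adj_mem_coversVerts (hM : G.IsMatching M) (hv : v ∈ coversVerts M) :
    ∃ u, G.Adj v u ∧ u ∈ coversVerts M := by
  obtain ⟨e, he, hve⟩ := hv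
  obtain ⟨a, b, hab, rfl⟩ := hM.1 e he
  rcases Sym2.mem_iff.1 hve with rfl | rfl
  exacts [⟨b, hab, _, he, Sym2.mem_mk_right _ _⟩,
    ⟨a, G.symm _ _ hab, _, he, Sym2.mem_mk_left _ _⟩]

theorem IsMatching.ncard_coversVerts (hM : G.IsMatching M) :
    (coversVerts M).ncard = 2 * M.ncard := by
  classical
  have hMfin : M.Finite := (G.finite.subset hM.coversVerts_subset).of_coversVerts
  have hcov : coversVerts M = ↑(hMfin.toFinset.biUnion Sym2.toFinset) := by
    ext; simp [Sym2.mem_toFinset]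
  have hdisj : (hMfin.toFinset : Set (Sym2 V)).PairwiseDisjoint Sym2.toFinset :=
    fun e he f hf hef => Finset.disjoint_left.2 fun w hwe hwf =>
      hM.2 e (by simpa using he) f (by simpa using hf) hef w (Sym2.mem_toFinset.1 hwe)
        (Sym2.mem_toFinset.1 hwf)
  have htwo : ∀ e ∈ hMfin.toFinset, e.toFinset.card = 2 := fun e he => by
    obtain ⟨a, b, hab, rfl⟩ := hM.1 e (by simpa using he)
    exact Sym2.card_toFinset_of_not_isDiag _
      (Sym2.mk_isDiag_iff.not.2 fun h => G.irrefl a (h ▸ hab))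
  rw [hcov, ncard_coe_finset, Finset.card_biUnion hdisj, Finset.sum_congr rfl htwo,
    Finset.sum_const, smul_eq_mul, ncard_eq_toFinset_card M hMfin, mul_comm]

theorem even_ncard_add_of_mem_matchingPattern (hX : X ∈ G.matchingPattern T) :
    Even ((G.verts \ T).ncard + X.ncard) := by
  obtain ⟨hXT, M, hM, hcov⟩ := hX
  have hfin : (G.verts \ T ∪ X).Finite := hcov ▸ G.finite.subset hM.coversVerts_subset
  rw [← ncard_union_eq (disjoint_sdiff_left.mono_right hXT) (finite_union.1 hfin).1
    (finite_union.1 hfin).2, ← hcov, hM.ncard_coversVerts]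
  exact even_two_mul _

theorem even_ncard_iff_of_mem_matchingPattern (hX : X ∈ G.matchingPattern T)
    (hY : Y ∈ G.matchingPattern T) : Even X.ncard ↔ Even Y.ncard := by
  have hX' := Nat.even_add.1 (even_ncard_add_of_mem_matchingPattern hX)
  have hY' := Nat.even_add.1 (even_ncard_add_of_mem_matchingPattern hY)
  exact hX'.symm.trans hY'

section Pair

variable {x y : V}

theorem mem_pair_empty_pair_iff_even (hxy : x ≠ y) (hX : X ⊆ {x, y}) :
    X ∈ ({∅, {x, y}} : Set (Set V)) ↔ Even X.ncard := by
  rcases subset_pair_iff_eq.1 hX with rfl | rfl | rfl | rfl <;>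
    simp [ncard_pair hxy, Set.ext_iff, hxy, hxy.symm]

theorem mem_pair_singletons_iff_not_even (hxy : x ≠ y) (hX : X ⊆ {x, y}) :
    X ∈ ({{x}, {y}} : Set (Set V)) ↔ ¬Even X.ncard := by
  rcases subset_pair_iff_eq.1 hX with rfl | rfl | rfl | rfl <;>
    simp [ncard_pair hxy, eq_singleton_iff_unique_mem, hxy, hxy.symm]

theorem matchingPattern_subset_of_even (hxy : x ≠ y) (hY : Y ∈ G.matchingPattern {x, y})
    (hY' : Even Y.ncard) : G.matchingPattern {x, y} ⊆ {∅, {x, y}} := fun _ hX =>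
  (mem_pair_empty_pair_iff_even hxy hX.1).2 ((even_ncard_iff_of_mem_matchingPattern hX hY).2 hY')

theorem matchingPattern_subset_of_not_even (hxy : x ≠ y) (hY : Y ∈ G.matchingPattern {x, y})
    (hY' : ¬Even Y.ncard) : G.matchingPattern {x, y} ⊆ {{x}, {y}} := fun _ hX =>
  (mem_pair_singletons_iff_not_even hxy hX.1).2
    ((even_ncard_iff_of_mem_matchingPattern hX hY).not.2 hY')

theorem matchingPattern_pair_eq (hxy : x ≠ y) :
    G.matchingPattern {x, y} = ∅ ∨ G.matchingPattern {x, y} = {∅} ∨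
      G.matchingPattern {x, y} = {{x}} ∨ G.matchingPattern {x, y} = {{y}} ∨
      G.matchingPattern {x, y} = {{x, y}} ∨ G.matchingPattern {x, y} = {{x}, {y}} ∨
      G.matchingPattern {x, y} = {∅, {x, y}} := by
  obtain hP | ⟨Y, hY⟩ := (G.matchingPattern {x, y}).eq_empty_or_nonempty
  · exact .inl hP
  by_cases hY' : Even Y.ncard
  · rcases subset_pair_iff_eq.1 (matchingPattern_subset_of_even hxy hY hY') with h | h | h | h <;>
      simp [h]
  · rcases subset_pair_iff_eq.1 (matchingPattern_subset_of_not_even hxy hY hY') with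
      h | h | h | h <;> simp [h]

end Pair

def ofEdges (S : Set V) [Finite S] (E : Set (Sym2 V)) : FinGraph V where
  verts := S
  finite := S.toFinite
  Adj u v := u ∈ S ∧ v ∈ S ∧ u ≠ v ∧ s(u, v) ∈ E
  symm _ _ := fun ⟨hu, hv, huv, he⟩ => ⟨hv, hu, huv.symm, Sym2.eq_swap ▸ he⟩
  irrefl _ h := h.2.2.1 rfl
  mem_of_adj _ _ h := ⟨h.1, h.2.1⟩

section ofEdges

variable {S N : Set V} {E : Set (Sym2 V)}

@[simp]
theorem ofEdges_verts [Finite S] : (ofEdges S E).verts = S := rfl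

@[simp]
theorem ofEdges_adj [Finite S] :
    (ofEdges S E).Adj u v ↔ u ∈ S ∧ v ∈ S ∧ u ≠ v ∧ s(u, v) ∈ E :=
  Iff.rfl

theorem matchingPattern_ofEdges_empty [Finite S] :
    (ofEdges S ∅).matchingPattern T = {X | X ⊆ T ∧ S \ T ∪ X = ∅} := by
  ext X
  refine ⟨fun ⟨hXT, M, hM, hcov⟩ => ⟨hXT, ?_⟩, fun ⟨hXT, h⟩ =>
    ⟨hXT, ∅, isMatching_empty _, by rw [coversVerts_empty]; exact h.symm⟩⟩
  have hM₀ : M = ∅ := eq_empty_of_forall_notMem fun e he => by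
    obtain ⟨_, _, ⟨-, -, -, he'⟩, -⟩ := hM.1 e he
    exact he'
  simpa [hM₀] using hcov.symm

theorem mem_matchingPattern_ofEdges_union [Finite ↑(T ∪ N)] (hTN : Disjoint T N) :
    X ∈ (ofEdges (T ∪ N) E).matchingPattern T ↔
      X ⊆ T ∧ ∃ M, (ofEdges (T ∪ N) E).IsMatching M ∧ coversVerts M = N ∪ X := by
  have hN : (T ∪ N) \ T = N := union_sdiff_cancel_left (disjoint_iff_inter_eq_empty.1 hTN).le
  rw [matchingPattern, mem_ofPred_eq, ofEdges_verts, hN]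

end ofEdges

end FinGraph

open FinGraph

section Realization

variable {V : Type} {x y z w : V}

def IsMatchingPatternOn (x y : V) (F : Set (Set V)) : Prop :=
  ∃ G : FinGraph V, x ∈ G.verts ∧ y ∈ G.verts ∧ G.matchingPattern {x, y} = F

theorem IsMatchingPatternOn.swap {F : Set (Set V)} (h : IsMatchingPatternOn x y F) :
    IsMatchingPatternOn y x F := by
  obtain ⟨G, hx, hy, hG⟩ := h
  exact ⟨G, hy, hx, by rwa [pair_comm]⟩

theorem isMatchingPatternOn_empty (hzx : z ≠ x) (hzy : z ≠ y) :
    IsMatchingPatternOn x y ∅ := by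
  refine ⟨ofEdges {x, y, z} ∅, by simp, by simp, ?_⟩
  rw [matchingPattern_ofEdges_empty, eq_empty_iff_forall_notMem]
  rintro X ⟨-, hX⟩
  exact eq_empty_iff_forall_notMem.1 hX z (.inl ⟨by simp, by simp [hzx, hzy]⟩)

theorem isMatchingPatternOn_singleton_empty : IsMatchingPatternOn x y {∅} := by
  refine ⟨ofEdges {x, y} ∅, by simp, by simp, ?_⟩
  ext X
  simp only [matchingPattern_ofEdges_empty, sdiff_self, empty_union, mem_singleton_iff]
  exact ⟨fun h => h.2, fun h => ⟨h ▸ empty_subset _, h⟩⟩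

theorem isMatchingPatternOn_singleton_singleton (hxy : x ≠ y) (hzx : z ≠ x) (hzy : z ≠ y) :
    IsMatchingPatternOn x y {{x}} := by
  set G := ofEdges ({x, y} ∪ {z}) {s(x, z)}
  have hTN : Disjoint ({x, y} : Set V) {z} := by simp [hzx, hzy]
  have hx : {x} ∈ G.matchingPattern {x, y} := (mem_matchingPattern_ofEdges_union hTN).2
    ⟨by simp, _, isMatching_singleton (ofEdges_adj.2 ⟨by simp, by simp, hzx.symm, by simp⟩),
      by simp [pair_comm]⟩
  have hy : {y} ∉ G.matchingPattern {x, y} := fun hy => by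
    obtain ⟨-, M, hM, hcov⟩ := (mem_matchingPattern_ofEdges_union hTN).1 hy
    -- `y` is isolated, so no matching covers it
    obtain ⟨u, ⟨-, -, -, hyu⟩, -⟩ := hM.exists_adj_mem_coversVerts (v := y) (by simp [hcov])
    simp [hxy.symm, hzy.symm] at hyu
  refine ⟨G, by simp [G], by simp [G], ?_⟩
  have h := matchingPattern_subset_of_not_even hxy hx (by simp)
  rw [pair_comm ({x} : Set V), subset_insert_iff_of_notMem hy] at h
  exact h.antisymm (singleton_subset_iff.2 hx)

theorem isMatchingPatternOn_singleton_pair (hxy : x ≠ y) (hzx : z ≠ x) (hzy : z ≠ y)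
    (hwx : w ≠ x) (hwy : w ≠ y) (hwz : w ≠ z) : IsMatchingPatternOn x y {{x, y}} := by
  set G := ofEdges ({x, y} ∪ {z, w}) {s(x, z), s(y, w)}
  have hTN : Disjoint ({x, y} : Set V) {z, w} := by simp [hzx, hzy, hwx, hwy]
  have hxy' : {x, y} ∈ G.matchingPattern {x, y} := by
    refine (mem_matchingPattern_ofEdges_union hTN).2 ⟨subset_rfl, _,
      (isMatching_singleton (ofEdges_adj.2 ⟨by simp, by simp, hwy.symm, by simp⟩)).insert
        (ofEdges_adj.2 ⟨by simp, by simp, hzx.symm, by simp⟩) (by simp [hxy, hwx.symm])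
        (by simp [hzy, hwz.symm]), ?_⟩
    ext; simp; tauto
  have hempty : (∅ : Set V) ∉ G.matchingPattern {x, y} := fun h => by
    obtain ⟨-, M, hM, hcov⟩ := (mem_matchingPattern_ofEdges_union hTN).1 h
    -- the only neighbour of `z` is `x`, which would then be covered as well
    obtain ⟨u, ⟨-, -, -, hzu⟩, hu⟩ :=
      hM.exists_adj_mem_coversVerts (v := z) (by simp [hcov])
    obtain rfl : u = x := by simpa [Sym2.eq_iff, hzx, hzy, hwz.symm] using hzu
    simp [hcov, hzx.symm, hwx.symm] at hu
  refine ⟨G, by simp [G], by simp [G], ?_⟩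
  have h := matchingPattern_subset_of_even hxy hxy' (by simp [ncard_pair hxy])
  rw [subset_insert_iff_of_notMem hempty] at h
  exact h.antisymm (singleton_subset_iff.2 hxy')

theorem isMatchingPatternOn_pair_singletons (hxy : x ≠ y) (hzx : z ≠ x) (hzy : z ≠ y) :
    IsMatchingPatternOn x y {{x}, {y}} := by
  set G := ofEdges ({x, y} ∪ {z}) {s(x, z), s(y, z)}
  have hTN : Disjoint ({x, y} : Set V) {z} := by simp [hzx, hzy]
  have hx : {x} ∈ G.matchingPattern {x, y} := (mem_matchingPattern_ofEdges_union hTN).2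
    ⟨by simp, _, isMatching_singleton (ofEdges_adj.2 ⟨by simp, by simp, hzx.symm, by simp⟩),
      by simp [pair_comm]⟩
  have hy : {y} ∈ G.matchingPattern {x, y} := (mem_matchingPattern_ofEdges_union hTN).2
    ⟨by simp, _, isMatching_singleton (ofEdges_adj.2 ⟨by simp, by simp, hzy.symm, by simp⟩),
      by simp [pair_comm]⟩
  refine ⟨G, by simp [G], by simp [G], ?_⟩
  exact (matchingPattern_subset_of_not_even hxy hx (by simp)).antisymm
    (insert_subset hx (singleton_subset_iff.2 hy))

theorem isMatchingPatternOn_pair_empty_pair (hxy : x ≠ y) :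
    IsMatchingPatternOn x y {∅, {x, y}} := by
  set G := ofEdges {x, y} {s(x, y)}
  have hempty : (∅ : Set V) ∈ G.matchingPattern {x, y} :=
    ⟨empty_subset _, ∅, isMatching_empty _, by simp [G]⟩
  have hxy' : {x, y} ∈ G.matchingPattern {x, y} :=
    ⟨subset_rfl, _, isMatching_singleton (ofEdges_adj.2 ⟨by simp, by simp, hxy, by simp⟩),
      by simp [G]⟩
  refine ⟨G, by simp [G], by simp [G], ?_⟩
  exact (matchingPattern_subset_of_even hxy hempty (by simp)).antisymm
    (insert_subset hempty (singleton_subset_iff.2 hxy'))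

end Realization

theorem matchingPattern_two_terminals_general {V : Type} [Infinite V] (x y : V) (hxy : x ≠ y)
    (F : Set (Set V)) :
    (∃ G : FinGraph V, x ∈ G.verts ∧ y ∈ G.verts ∧ G.matchingPattern {x, y} = F) ↔
      (F = ∅ ∨ F = {∅} ∨ F = {{x}} ∨ F = {{y}} ∨ F = {{x, y}} ∨
       F = {{x}, {y}} ∨ F = {∅, {x, y}}) := by
  refine ⟨fun ⟨G, _, _, hG⟩ => hG ▸ G.matchingPattern_pair_eq hxy, ?_⟩
  obtain ⟨z, hz⟩ := (toFinite {x, y}).exists_notMem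
  obtain ⟨w, hw⟩ := (toFinite {x, y, z}).exists_notMem
  simp only [mem_insert_iff, mem_singleton_iff, not_or] at hz hw
  rintro (rfl | rfl | rfl | rfl | rfl | rfl | rfl)
  exacts [isMatchingPatternOn_empty hz.1 hz.2, isMatchingPatternOn_singleton_empty,
    isMatchingPatternOn_singleton_singleton hxy hz.1 hz.2,
    (isMatchingPatternOn_singleton_singleton hxy.symm hz.2 hz.1).swap,
    isMatchingPatternOn_singleton_pair hxy hz.1 hz.2 hw.1 hw.2.1 hw.2.2,
    isMatchingPatternOn_pair_singletons hxy hz.1 hz.2, isMatchingPatternOn_pair_empty_pair hxy]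

/-- Characterization of the matching patterns on a two-element terminal set `T = {x, y}`:
a family `F` of subsets of `T` is the matching pattern on `T` of some finite simple graph
containing `x` and `y` if and only if `F` is one of the seven families
`∅`, `{∅}`, `{{x}}`, `{{y}}`, `{{x,y}}`, `{{x},{y}}`, `{∅,{x,y}}`. -/
theorem matchingPattern_two_terminals {V : Type} [Infinite V] (x y : V) (hxy : x ≠ y)
    (F : Set (Set V)) (hF : ∀ X ∈ F, X ⊆ ({x, y} : Set V)) :
    (∃ G : FinGraph V, x ∈ G.verts ∧ y ∈ G.verts ∧ G.matchingPattern {x, y} = F) ↔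
      (F = ∅ ∨ F = {∅} ∨ F = {{x}} ∨ F = {{y}} ∨ F = {{x, y}} ∨
       F = {{x}, {y}} ∨ F = {∅, {x, y}}) :=
  matchingPattern_two_terminals_general x y hxy F
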